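/- arXiv:2102.12732 — 2 statements merged into one kernel-verified Lean document; each statement's English description precedes it below -/
import Mathlib

section
/- Let a, b, L > 0. If u : [0,L] → ℝ and y : [-L,0] → ℝ satisfy u'' = 0 on (0,L), y'''' = 0 on (-L,0), with boundary conditions u(L) = 0, y(-L) = 0, y'(-L) = 0, y''(0) = 0, and transmission conditions u(0) = y(0) and a·u'(0) = -b·y'''(0), then u ≡ 0 and y ≡ 0. -/
/-!
A function whose `(n+1)`-st derivative vanishes on an interval coincides there with its Taylor
polynomial of degree `n` (the Lagrange remainder vanishes). So `u` is affine and `y` is a cubic,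
and expanding at `0` the four boundary and two transmission conditions become a linear system in
the Taylor coefficients whose only solution is zero, because `a L² / 3 + b > 0`.
-/

open Set

open Finset Nat in
theorem eq_sum_iteratedDeriv_of_iteratedDeriv_succ_eq_zero {f : ℝ → ℝ} {n : ℕ} {a b x₀ x : ℝ}
    (hf : ContDiff ℝ (n + 1) f) (h : ∀ t ∈ Ioo a b, iteratedDeriv (n + 1) f t = 0)
    (hx₀ : x₀ ∈ Icc a b) (hx : x ∈ Icc a b) :
    f x = ∑ k ∈ range (n + 1), iteratedDeriv k f x₀ * (x - x₀) ^ k / k ! := by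
  rcases eq_or_ne x₀ x with rfl | hne
  · simp [sum_range_succ']
  obtain ⟨t, ht, hrem⟩ := taylor_mean_remainder_lagrange_iteratedDeriv hne hf.contDiffOn
  rw [h t (uIoo_subset_Ioo hx₀ hx ht), zero_mul, zero_div, sub_eq_zero, taylor_within_apply] at hrem
  rw [hrem]
  refine sum_congr rfl fun k hk => ?_
  have hk : (k : WithTop ℕ∞) ≤ n + 1 := by norm_cast; exact (mem_range.mp hk).le
  rw [iteratedDerivWithin_eq_iteratedDeriv (uniqueDiffOn_uIcc hne) (hf.of_le hk).contDiffAt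
    left_mem_uIcc, smul_eq_mul]
  ring

theorem coeffs_eq_zero_of_clamped_transmission {a b L u₀ u₁ y₀ y₁ y₃ : ℝ}
    (ha : 0 < a) (hb : 0 < b) (hL : 0 < L)
    (huL : u₀ + u₁ * L = 0) (hyL : y₀ - y₁ * L - y₃ * L ^ 3 / 6 = 0)
    (hy'L : y₁ + y₃ * L ^ 2 / 2 = 0) (hu₀ : u₀ = y₀) (hflux : a * u₁ = -b * y₃) :
    u₀ = 0 ∧ u₁ = 0 ∧ y₀ = 0 ∧ y₁ = 0 ∧ y₃ = 0 := by
  -- the first four equations give `u₁ L = -y₀ = y₃ L³ / 3`; multiply the flux condition by `L`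
  have hy₃L : y₃ * L * (a * L ^ 2 / 3 + b) = 0 := by
    linear_combination L * hflux - a * (huL - hu₀ - hyL - L * hy'L)
  have hy₃ : y₃ = 0 := by
    have : a * L ^ 2 / 3 + b ≠ 0 := by positivity
    simpa [hL.ne', this] using hy₃L
  have hu₁ : u₁ = 0 := by simpa [ha.ne', hy₃] using hflux
  have hy₁ : y₁ = 0 := by simpa [hy₃] using hy'L
  have hy₀ : y₀ = 0 := by simpa [hy₁, hy₃] using hyL
  exact ⟨hu₀.trans hy₀, hu₁, hy₀, hy₁, hy₃⟩

theorem stmt11 (a b L : ℝ) (ha : 0 < a) (hb : 0 < b) (hL : 0 < L)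
    (u y : ℝ → ℝ) (hu : ContDiff ℝ 2 u) (hy : ContDiff ℝ 4 y)
    (huxx : ∀ x ∈ Set.Ioo (0:ℝ) L, iteratedDeriv 2 u x = 0)
    (hyxxxx : ∀ x ∈ Set.Ioo (-L) (0:ℝ), iteratedDeriv 4 y x = 0)
    (hbc1 : u L = 0) (hbc2 : y (-L) = 0) (hbc3 : deriv y (-L) = 0)
    (hbc4 : iteratedDeriv 2 y 0 = 0)
    (htr1 : u 0 = y 0) (htr2 : a * deriv u 0 = -b * iteratedDeriv 3 y 0) :
    (∀ x ∈ Set.Icc (0:ℝ) L, u x = 0) ∧ (∀ x ∈ Set.Icc (-L) (0:ℝ), y x = 0) := by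
  have h0u : (0 : ℝ) ∈ Icc 0 L := ⟨le_rfl, hL.le⟩
  have h0y : (0 : ℝ) ∈ Icc (-L) 0 := ⟨neg_nonpos.mpr hL.le, le_rfl⟩
  have hLy : -L ∈ Icc (-L) 0 := ⟨le_rfl, neg_nonpos.mpr hL.le⟩
  have hu_affine : ∀ x ∈ Icc 0 L, u x = u 0 + deriv u 0 * x := fun x hx => by
    simpa [Finset.sum_range_succ] using
      eq_sum_iteratedDeriv_of_iteratedDeriv_succ_eq_zero (n := 1) hu huxx h0u hx
  have hy_cubic : ∀ x ∈ Icc (-L) 0,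
      y x = y 0 + deriv y 0 * x + iteratedDeriv 3 y 0 * x ^ 3 / 6 := fun x hx => by
    simpa [Finset.sum_range_succ, hbc4, Nat.factorial] using
      eq_sum_iteratedDeriv_of_iteratedDeriv_succ_eq_zero (n := 3) hy hyxxxx h0y hx
  have hy'_quadratic : deriv y (-L) = deriv y 0 + iteratedDeriv 3 y 0 * L ^ 2 / 2 := by
    simpa [Finset.sum_range_succ, ← iteratedDeriv_succ', hbc4, Nat.factorial] using
      eq_sum_iteratedDeriv_of_iteratedDeriv_succ_eq_zero (n := 2)
        (contDiff_succ_iff_deriv.mp hy).2.2 (by simpa [← iteratedDeriv_succ'] using hyxxxx) h0y hLy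
  obtain ⟨hu₀, hu₁, hy₀, hy₁, hy₃⟩ := coeffs_eq_zero_of_clamped_transmission ha hb hL
    (by rw [← hu_affine L ⟨hL.le, le_rfl⟩, hbc1])
    (by linear_combination (hy_cubic (-L) hLy).symm.trans hbc2)
    (hy'_quadratic ▸ hbc3) htr1 htr2
  refine ⟨fun x hx => ?_, fun x hx => ?_⟩
  · rw [hu_affine x hx, hu₀, hu₁]; ring
  · rw [hy_cubic x hx, hy₀, hy₁, hy₃]; ring
end

section
/- Let b, L > 0 and λ ∈ ℝ. If y : [-L,0] → ℂ is a C⁴ function satisfying λ²y - b·y'''' = 0 on (-L,0) together with y(0) = y''(0) = y'''(0) = 0 and y(-L) = y'(-L) = 0, then y ≡ 0. -/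
/-!
Pairing `y'''' = μ y` (with `μ = λ²/b ≥ 0`) with `y'` gives the conserved energy
`μ/2 ‖y‖² + 1/2 ‖y''‖² - ⟪y''', y'⟫`, which vanishes at `0` and hence everywhere. Then
`⟪y'', y'⟫` is nondecreasing and vanishes at both ends, which forces `y'' = 0`; integrating twice
from `-L` gives `y = 0`.
-/

open Set
open scoped RealInnerProductSpace

section RealFunction

variable {f f' : ℝ → ℝ} {a c : ℝ}

lemma monotoneOn_Icc_of_hasDerivAt_nonneg (hf : ∀ x, HasDerivAt f (f' x) x)
    (hf' : ∀ x ∈ Ioo a c, 0 ≤ f' x) : MonotoneOn f (Icc a c) :=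
  monotoneOn_of_hasDerivWithinAt_nonneg (convex_Icc a c)
    (fun x _ => (hf x).continuousAt.continuousWithinAt) (fun x _ => (hf x).hasDerivWithinAt)
    (by simpa only [interior_Icc] using hf')

lemma eq_of_hasDerivAt_eq_zero_on_Ioo (hf : ∀ x, HasDerivAt f (f' x) x)
    (hf' : ∀ x ∈ Ioo a c, f' x = 0) {x z : ℝ} (hx : x ∈ Icc a c) (hz : z ∈ Icc a c) :
    f x = f z := by
  have hmono := monotoneOn_Icc_of_hasDerivAt_nonneg hf fun t ht => (hf' t ht).ge
  have hanti := monotoneOn_Icc_of_hasDerivAt_nonneg (fun t => (hf t).neg)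
    fun t ht => (neg_eq_zero.2 (hf' t ht)).ge
  rcases le_total x z with hxz | hzx
  · exact le_antisymm (hmono hx hz hxz) (neg_le_neg_iff.1 (hanti hx hz hxz))
  · exact le_antisymm (neg_le_neg_iff.1 (hanti hz hx hzx)) (hmono hz hx hzx)

lemma deriv_eq_zero_on_Ioo_of_nonneg_of_eq (hf : ∀ x, HasDerivAt f (f' x) x)
    (hf' : ∀ x ∈ Ioo a c, 0 ≤ f' x) (hac : f a = f c) : ∀ x ∈ Ioo a c, f' x = 0 := by
  have hmono := monotoneOn_Icc_of_hasDerivAt_nonneg hf hf'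
  have hconst : ∀ t ∈ Ioo a c, f t = f c := fun t ht =>
    le_antisymm (hmono (Ioo_subset_Icc_self ht) (right_mem_Icc.2 (ht.1.trans ht.2).le) ht.2.le)
      (hac ▸ hmono (left_mem_Icc.2 (ht.1.trans ht.2).le) (Ioo_subset_Icc_self ht) ht.1.le)
  intro x hx
  have hloc : f =ᶠ[nhds x] fun _ => f c := Filter.eventually_of_mem (isOpen_Ioo.mem_nhds hx) hconst
  exact (hf x).unique ((hasDerivAt_const x (f c)).congr_of_eventuallyEq hloc)

end RealFunction

variable {E : Type*} [NormedAddCommGroup E] [InnerProductSpace ℝ E]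

/-- `‖g‖²` has derivative `2 ⟪g, g'⟫`, which vanishes inside `[a, c]`. -/
lemma eq_zero_of_hasDerivAt_eq_zero_on_Ioo {g g' : ℝ → E} {a c : ℝ}
    (hg : ∀ x, HasDerivAt g (g' x) x) (hg' : ∀ x ∈ Ioo a c, g' x = 0) (ha : g a = 0) :
    ∀ x ∈ Icc a c, g x = 0 := by
  intro x hx
  have hnorm := eq_of_hasDerivAt_eq_zero_on_Ioo (fun t => (hg t).norm_sq)
    (fun t ht => by rw [hg' t ht, inner_zero_right, mul_zero]) hx
    (left_mem_Icc.2 (hx.1.trans hx.2))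
  simpa [ha] using hnorm

lemma ContDiff.hasDerivAt_iteratedDeriv {y : ℝ → E} {k : WithTop ℕ∞} {n : ℕ}
    (hy : ContDiff ℝ k y) (hn : n < k) (x : ℝ) :
    HasDerivAt (iteratedDeriv n y) (iteratedDeriv (n + 1) y x) x := by
  rw [iteratedDeriv_succ]
  exact (hy.differentiable_iteratedDeriv n hn x).hasDerivAt

noncomputable def beamEnergy (μ : ℝ) (y : ℝ → E) (x : ℝ) : ℝ :=
  μ / 2 * ‖y x‖ ^ 2 + ‖iteratedDeriv 2 y x‖ ^ 2 / 2
    - ⟪iteratedDeriv 3 y x, iteratedDeriv 1 y x⟫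

section BeamEquation

variable {μ a c : ℝ} {y : ℝ → E}

lemma hasDerivAt_beamEnergy (hy : ContDiff ℝ 4 y) (x : ℝ) :
    HasDerivAt (beamEnergy μ y) ⟪μ • y x - iteratedDeriv 4 y x, iteratedDeriv 1 y x⟫ x := by
  have hd := fun n (hn : n < 4) => hy.hasDerivAt_iteratedDeriv (n := n) (by exact_mod_cast hn) x
  have hy0 := hd 0 (by norm_num)
  simp only [iteratedDeriv_zero, zero_add] at hy0
  refine (((hy0.norm_sq.const_mul (μ / 2)).add ((hd 2 (by norm_num)).norm_sq.div_const 2)).sub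
    ((hd 3 (by norm_num)).inner ℝ (hd 1 (by norm_num)))).congr_deriv ?_
  rw [inner_sub_left, real_inner_smul_left, real_inner_comm (iteratedDeriv 2 y x)]
  ring

lemma beamEnergy_eq_zero (hy : ContDiff ℝ 4 y)
    (hode : ∀ x ∈ Ioo a c, iteratedDeriv 4 y x = μ • y x) (hc0 : y c = 0)
    (hc2 : iteratedDeriv 2 y c = 0) (hc3 : iteratedDeriv 3 y c = 0) :
    ∀ x ∈ Icc a c, beamEnergy μ y x = 0 := by
  intro x hx
  rw [eq_of_hasDerivAt_eq_zero_on_Ioo (hasDerivAt_beamEnergy hy)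
    (fun t ht => by rw [hode t ht, sub_self, inner_zero_left]) hx
    (right_mem_Icc.2 (hx.1.trans hx.2))]
  simp [beamEnergy, hc0, hc2, hc3]

/-- Along a solution of zero energy, `⟪y'', y'⟫` has derivative `μ/2 ‖y‖² + 3/2 ‖y''‖² ≥ 0`;
since it vanishes at both ends, `y''` must vanish inside. -/
lemma iteratedDeriv_two_eq_zero (hμ : 0 ≤ μ) (hy : ContDiff ℝ 4 y)
    (hode : ∀ x ∈ Ioo a c, iteratedDeriv 4 y x = μ • y x) (hc0 : y c = 0)
    (hc2 : iteratedDeriv 2 y c = 0) (hc3 : iteratedDeriv 3 y c = 0)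
    (ha1 : iteratedDeriv 1 y a = 0) :
    ∀ x ∈ Ioo a c, iteratedDeriv 2 y x = 0 := by
  have hd := fun n (hn : n < 4) x => hy.hasDerivAt_iteratedDeriv (n := n) (by exact_mod_cast hn) x
  have hderiv : ∀ x ∈ Ioo a c, ⟪iteratedDeriv 2 y x, iteratedDeriv 2 y x⟫
      + ⟪iteratedDeriv 3 y x, iteratedDeriv 1 y x⟫
      = μ / 2 * ‖y x‖ ^ 2 + 3 / 2 * ‖iteratedDeriv 2 y x‖ ^ 2 := by
    intro x hx
    have hE := beamEnergy_eq_zero hy hode hc0 hc2 hc3 x (Ioo_subset_Icc_self hx)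
    rw [beamEnergy] at hE
    rw [real_inner_self_eq_norm_sq]
    linarith
  have hzero := deriv_eq_zero_on_Ioo_of_nonneg_of_eq
    (fun x => (hd 2 (by norm_num) x).inner ℝ (hd 1 (by norm_num) x))
    (fun x hx => by rw [hderiv x hx]; positivity) (by simp [ha1, hc2])
  intro x hx
  have hsum := (hderiv x hx).symm.trans (hzero x hx)
  have hsq : ‖iteratedDeriv 2 y x‖ ^ 2 = 0 := by nlinarith [sq_nonneg ‖y x‖]
  simpa using hsq

theorem eq_zero_of_iteratedDeriv_four_eq_smul (hμ : 0 ≤ μ) (hy : ContDiff ℝ 4 y)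
    (hode : ∀ x ∈ Ioo a c, iteratedDeriv 4 y x = μ • y x) (hc0 : y c = 0)
    (hc2 : iteratedDeriv 2 y c = 0) (hc3 : iteratedDeriv 3 y c = 0)
    (ha0 : y a = 0) (ha1 : iteratedDeriv 1 y a = 0) :
    ∀ x ∈ Icc a c, y x = 0 := by
  have hd1 := eq_zero_of_hasDerivAt_eq_zero_on_Ioo
    (hy.hasDerivAt_iteratedDeriv (n := 1) (by norm_num))
    (iteratedDeriv_two_eq_zero hμ hy hode hc0 hc2 hc3 ha1) ha1
  have hy0 := hy.hasDerivAt_iteratedDeriv (n := 0) (by norm_num)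
  simp only [iteratedDeriv_zero, zero_add] at hy0
  exact eq_zero_of_hasDerivAt_eq_zero_on_Ioo hy0
    (fun x hx => hd1 x (Ioo_subset_Icc_self hx)) ha0

end BeamEquation

theorem stmt12_general (b L lam : ℝ) (hb : 0 < b)
    (y : ℝ → ℂ) (hy : ContDiff ℝ 4 y)
    (hode : ∀ x ∈ Set.Ioo (-L) (0:ℝ),
      (lam : ℂ)^2 * y x - (b : ℂ) * iteratedDeriv 4 y x = 0)
    (hbc0 : y 0 = 0) (hbc1 : iteratedDeriv 2 y 0 = 0) (hbc2 : iteratedDeriv 3 y 0 = 0)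
    (hbc3 : y (-L) = 0) (hbc4 : deriv y (-L) = 0) :
    ∀ x ∈ Set.Icc (-L) (0:ℝ), y x = 0 := by
  refine eq_zero_of_iteratedDeriv_four_eq_smul (μ := lam ^ 2 / b) (by positivity) hy
    (fun x hx => ?_) hbc0 hbc1 hbc2 hbc3 (by rwa [iteratedDeriv_one])
  have hb' : (b : ℂ) ≠ 0 := Complex.ofReal_ne_zero.2 hb.ne'
  rw [Complex.real_smul, Complex.ofReal_div, Complex.ofReal_pow]
  field_simp
  linear_combination -(hode x hx)

theorem stmt12 (b L lam : ℝ) (hb : 0 < b) (hL : 0 < L)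
    (y : ℝ → ℂ) (hy : ContDiff ℝ 4 y)
    (hode : ∀ x ∈ Set.Ioo (-L) (0:ℝ),
      (lam : ℂ)^2 * y x - (b : ℂ) * iteratedDeriv 4 y x = 0)
    (hbc0 : y 0 = 0) (hbc1 : iteratedDeriv 2 y 0 = 0) (hbc2 : iteratedDeriv 3 y 0 = 0)
    (hbc3 : y (-L) = 0) (hbc4 : deriv y (-L) = 0) :
    ∀ x ∈ Set.Icc (-L) (0:ℝ), y x = 0 :=
  stmt12_general b L lam hb y hy hode hbc0 hbc1 hbc2 hbc3 hbc4
end
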